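/- arXiv:1704.04819 — 5 statements merged into one kernel-verified Lean document; each statement's English description precedes it below -/
import Mathlib

section
/- There exists a universal constant C>0 with the following property. Let 0<β≤1, N∈ℕ with N≥1, and M,B≥0. Let φ:ℝ³→ℝ satisfy |φ(k)| ≤ M for all k ∈ ℝ³ and ∑_{r∈2πℤ³} φ(r/N^β)² ≤ B²·N^{3β}. Then for every q ∈ 2πℤ³, (1/N)·∑_{r∈2πℤ³, r≠−q} |φ(r/N^β)|/|q+r|² ≤ C·(M+B)·N^{β−1}, and in particular this sum converges. -/
open MeasureTheory Real

noncomputable section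

/-- `ℝ³` as a Euclidean space. -/
abbrev E3 : Type := EuclideanSpace ℝ (Fin 3)

/-- The point `2πn` of the lattice `Λ* = 2πℤ³ ⊂ ℝ³`. -/
def latticePt (n : Fin 3 → ℤ) : E3 := WithLp.toLp 2 (fun i => 2 * π * (n i : ℝ))

/-!
With `j = ‖q + r‖∞ ≥ 1` and `a = |φ(r/N^β)| ≤ M`, every term satisfies
`a/|q+r|² ≤ a²/(4c) + min(M/j², c/j⁴)`, the second bound being AM–GM. The first part sums to at
most `B²N^{3β}/(4c)`; the second depends on `r` only through `j`, and the shell `‖m‖∞ = j` of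
`ℤ³` has `O(j²)` points, so it sums to `O(KM + c/K)` for any cutoff `K`. Taking `K ≈ N^β` and
`c = (M+B)N^{2β}` makes all three contributions `O((M+B)N^β)`.
-/

open Finset

namespace IntLattice

variable {ι : Type*} [Fintype ι]

def supNorm (m : ι → ℤ) : ℕ := univ.sup fun i => (m i).natAbs

lemma supNorm_eq_zero {m : ι → ℤ} : supNorm m = 0 ↔ m = 0 := by
  simp [supNorm, funext_iff]

variable [DecidableEq ι]

def cube (J : ℕ) : Finset (ι → ℤ) := Fintype.piFinset fun _ => Icc (-(J : ℤ)) J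

lemma mem_cube {m : ι → ℤ} {J : ℕ} : m ∈ cube J ↔ supNorm m ≤ J := by
  simp only [cube, Fintype.mem_piFinset, mem_Icc, supNorm, Finset.sup_le_iff, mem_univ,
    forall_const]
  exact forall_congr' fun i => by omega

lemma card_cube (J : ℕ) : #(cube J : Finset (ι → ℤ)) = (2 * J + 1) ^ Fintype.card ι := by
  simp only [cube, Fintype.card_piFinset, Int.card_Icc, prod_const, card_univ]
  congr 1
  omega

lemma card_filter_supNorm_eq_succ_le (s : Finset (ι → ℤ)) (j : ℕ) :
    #{m ∈ s | supNorm m = j + 1} ≤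
      2 * Fintype.card ι * 3 ^ (Fintype.card ι - 1) * (j + 1) ^ (Fintype.card ι - 1) := by
  set d := Fintype.card ι
  have hsub : {m ∈ s | supNorm m = j + 1} ⊆ cube (j + 1) \ cube j := fun m hm => by
    simp only [mem_filter] at hm
    simp [mem_sdiff, mem_cube, hm.2]
  have hdiff : ((2 * j + 3) ^ d - (2 * j + 1) ^ d : ℤ) ≤ 2 * d * (2 * j + 3) ^ (d - 1) := by
    have := abs_pow_sub_pow_le (2 * j + 3 : ℤ) (2 * j + 1) d
    rw [abs_of_nonneg (by omega : (0 : ℤ) ≤ 2 * j + 3),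
      abs_of_nonneg (by omega : (0 : ℤ) ≤ 2 * j + 1), max_eq_left (by omega),
      show (2 * j + 3 - (2 * j + 1) : ℤ) = 2 by ring, abs_two] at this
    linarith [le_abs_self ((2 * j + 3 : ℤ) ^ d - (2 * j + 1) ^ d)]
  calc #{m ∈ s | supNorm m = j + 1} ≤ #(cube (j + 1) \ cube j : Finset (ι → ℤ)) :=
        card_le_card hsub
    _ = (2 * j + 3) ^ d - (2 * j + 1) ^ d := by
      rw [card_sdiff_of_subset fun m hm => mem_cube.2 ((mem_cube.1 hm).trans j.le_succ),
        card_cube, card_cube]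
      rfl
    _ ≤ 2 * d * (2 * j + 3) ^ (d - 1) := by
      zify [Nat.pow_le_pow_left (by omega : 2 * j + 1 ≤ 2 * j + 3) d]
      exact hdiff
    _ ≤ 2 * d * 3 ^ (d - 1) * (j + 1) ^ (d - 1) := by
      rw [mul_assoc _ (3 ^ _), ← mul_pow]
      gcongr
      omega

lemma summable_and_tsum_comp_supNorm_le {h : ℕ → ℝ} (h_zero : h 0 = 0)
    (h_nonneg : ∀ j, 0 ≤ h j) {A : ℝ}
    (hA : ∀ n, ∑ j ∈ range n, (j : ℝ) ^ (Fintype.card ι - 1) * h j ≤ A) :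
    Summable (fun m : ι → ℤ => h (supNorm m)) ∧
      ∑' m : ι → ℤ, h (supNorm m) ≤ 2 * Fintype.card ι * 3 ^ (Fintype.card ι - 1) * A := by
  set d := Fintype.card ι
  have hfiber (u : Finset (ι → ℤ)) (j : ℕ) :
      (#{m ∈ u | supNorm m = j} : ℝ) * h j ≤
        2 * d * 3 ^ (d - 1) * ((j : ℝ) ^ (d - 1) * h j) := by
    rcases j with _ | j
    · simp [h_zero]
    · calc (#{m ∈ u | supNorm m = j + 1} : ℝ) * h (j + 1)
          ≤ ((2 * d * 3 ^ (d - 1) * (j + 1) ^ (d - 1) : ℕ) : ℝ) * h (j + 1) := by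
            gcongr
            · exact h_nonneg _
            · exact card_filter_supNorm_eq_succ_le u j
        _ = _ := by push_cast; ring
  have hfin (u : Finset (ι → ℤ)) : ∑ m ∈ u, h (supNorm m) ≤ 2 * d * 3 ^ (d - 1) * A :=
    calc ∑ m ∈ u, h (supNorm m)
        = ∑ j ∈ range (u.sup supNorm + 1), ∑ m ∈ u with supNorm m = j, h j :=
          (sum_fiberwise_of_maps_to' (fun m hm => mem_range_succ_iff.2 (le_sup hm)) _).symm
      _ = ∑ j ∈ range (u.sup supNorm + 1), (#{m ∈ u | supNorm m = j} : ℝ) * h j := by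
          simp only [sum_const, nsmul_eq_mul]
      _ ≤ ∑ j ∈ range (u.sup supNorm + 1), 2 * d * 3 ^ (d - 1) * ((j : ℝ) ^ (d - 1) * h j) :=
          sum_le_sum fun j _ => hfiber u j
      _ ≤ 2 * d * 3 ^ (d - 1) * A := by rw [← mul_sum]; gcongr; exact hA _
  have hsum := summable_of_sum_le (fun m => h_nonneg _) hfin
  exact ⟨hsum, hsum.tsum_le_of_sum_le hfin⟩

end IntLattice

lemma sum_range_sq_mul_min_le {M c : ℝ} (hM : 0 ≤ M) (hc : 0 ≤ c) (K n : ℕ) :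
    ∑ j ∈ range n, (j : ℝ) ^ 2 * min (M / j ^ 2) (c / j ^ 4) ≤
      (K + 1) * M + 2 * c / (K + 1) := by
  rw [← sum_filter_add_sum_filter_not (range n) (· ≤ K)]
  have hnear :
      ∑ j ∈ range n with j ≤ K, (j : ℝ) ^ 2 * min (M / j ^ 2) (c / j ^ 4) ≤ (K + 1) * M :=
    calc _ ≤ ∑ j ∈ range n with j ≤ K, M := by
          refine sum_le_sum fun j _ =>
            (mul_le_mul_of_nonneg_left (min_le_left _ _) (by positivity)).trans ?_
          rcases eq_or_ne j 0 with rfl | hj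
          · simpa using hM
          · rw [mul_div_cancel₀ _ (by positivity)]
      _ ≤ (K + 1) * M := by
          rw [sum_const, nsmul_eq_mul]
          gcongr
          exact_mod_cast (card_le_card fun j hj => by simp at hj ⊢; omega).trans
            (card_range (K + 1)).le
  have hfar :
      ∑ j ∈ range n with ¬j ≤ K, (j : ℝ) ^ 2 * min (M / j ^ 2) (c / j ^ 4) ≤ 2 * c / (K + 1) :=
    calc _ ≤ ∑ j ∈ Ioo K n, c * ((j : ℝ) ^ 2)⁻¹ := by
          rw [show {j ∈ range n | ¬j ≤ K} = Ioo K n by ext; simp; omega]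
          refine sum_le_sum fun j hj =>
            (mul_le_mul_of_nonneg_left (min_le_right _ _) (by positivity)).trans_eq ?_
          have : (j : ℝ) ≠ 0 := Nat.cast_ne_zero.2 (by have := (mem_Ioo.1 hj).1; omega)
          field_simp
      _ ≤ 2 * c / (K + 1) := by
          rw [← mul_sum, mul_comm 2 c, mul_div_assoc]
          exact mul_le_mul_of_nonneg_left (sum_Ioo_inv_sq_le K n) hc
  linarith

open IntLattice

lemma latticePt_add (q r : Fin 3 → ℤ) : latticePt q + latticePt r = latticePt (q + r) := by
  ext i
  simp [latticePt]
  ring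

lemma supNorm_le_norm_latticePt (m : Fin 3 → ℤ) : (supNorm m : ℝ) ≤ ‖latticePt m‖ := by
  obtain ⟨i, -, hi⟩ := exists_mem_eq_sup univ univ_nonempty fun i => (m i).natAbs
  calc (supNorm m : ℝ) = |(m i : ℝ)| := by rw [supNorm, hi, Nat.cast_natAbs, Int.cast_abs]
    _ ≤ 2 * π * |(m i : ℝ)| := le_mul_of_one_le_left (abs_nonneg _) (by linarith [pi_gt_three])
    _ = ‖latticePt m i‖ := by simp [latticePt, abs_of_pos pi_pos]
    _ ≤ ‖latticePt m‖ := PiLp.norm_apply_le _ _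

lemma div_sq_le_sq_div_add_min {x M j t c : ℝ} (hx : 0 ≤ x) (hxM : x ≤ M) (hj : 0 < j)
    (hjt : j ≤ t) (hc : 0 < c) : x / t ^ 2 ≤ x ^ 2 / (4 * c) + min (M / j ^ 2) (c / j ^ 4) := by
  have ht : x / t ^ 2 ≤ x / j ^ 2 := by gcongr
  rw [← sub_le_iff_le_add']
  refine le_min ?_ ?_
  · have : x / j ^ 2 ≤ M / j ^ 2 := by gcongr
    linarith [show 0 ≤ x ^ 2 / (4 * c) by positivity]
  · have amgm : x ^ 2 / (4 * c) + c / j ^ 4 - x / j ^ 2 = (x - 2 * c / j ^ 2) ^ 2 / (4 * c) := by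
      field_simp
      ring
    linarith [show 0 ≤ (x - 2 * c / j ^ 2) ^ 2 / (4 * c) by positivity]

lemma summable_and_tsum_div_norm_sq_le {a : (Fin 3 → ℤ) → ℝ} {M c : ℝ} (ha : ∀ r, 0 ≤ a r)
    (haM : ∀ r, a r ≤ M) (hc : 0 < c) (ha2 : Summable fun r => a r ^ 2) (K : ℕ)
    (q : Fin 3 → ℤ) :
    Summable (fun r : {r : Fin 3 → ℤ // r ≠ -q} => a r / ‖latticePt q + latticePt r‖ ^ 2) ∧
      ∑' r : {r : Fin 3 → ℤ // r ≠ -q}, a r / ‖latticePt q + latticePt r‖ ^ 2 ≤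
        (∑' r, a r ^ 2) / (4 * c) + 54 * ((K + 1) * M + 2 * c / (K + 1)) := by
  have hM : 0 ≤ M := (ha 0).trans (haM 0)
  set h : ℕ → ℝ := fun j => min (M / j ^ 2) (c / j ^ 4)
  -- `h 0 = 0` holds only through `x / 0 = 0`; the shell `j = 0` is the excluded point `r = -q`.
  obtain ⟨hh, hh_le⟩ := summable_and_tsum_comp_supNorm_le (ι := Fin 3) (h := h) (by simp [h])
    (fun j => le_min (by positivity) (by positivity))
    (fun n => by simpa using sum_range_sq_mul_min_le hM hc.le K n)
  set G : (Fin 3 → ℤ) → ℝ := fun r => a r ^ 2 / (4 * c) + h (supNorm (q + r))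
  have hh_shift : Summable fun r => h (supNorm (q + r)) :=
    (Equiv.addLeft q).summable_iff.2 hh
  have hG : Summable G := (ha2.div_const _).add hh_shift
  have hG_tsum : ∑' r, G r = (∑' r, a r ^ 2) / (4 * c) + ∑' m : Fin 3 → ℤ, h (supNorm m) := by
    rw [(ha2.div_const _).tsum_add hh_shift, tsum_div_const,
      ← (Equiv.addLeft q).tsum_eq fun m => h (supNorm m)]
    rfl
  have hle (r : {r : Fin 3 → ℤ // r ≠ -q}) : a r / ‖latticePt q + latticePt r‖ ^ 2 ≤ G r := by
    have hj : 0 < supNorm (q + r.1) := by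
      rw [Nat.pos_iff_ne_zero, Ne, supNorm_eq_zero]
      exact fun h0 => r.2 (eq_neg_of_add_eq_zero_right h0)
    rw [latticePt_add]
    exact div_sq_le_sq_div_add_min (ha r) (haM r) (by exact_mod_cast hj)
      (supNorm_le_norm_latticePt _) hc
  have hnonneg (r : {r : Fin 3 → ℤ // r ≠ -q}) : 0 ≤ a r / ‖latticePt q + latticePt r‖ ^ 2 :=
    div_nonneg (ha r) (sq_nonneg _)
  have hsum := (hG.subtype _).of_nonneg_of_le hnonneg hle
  refine ⟨hsum, ?_⟩
  calc _ ≤ ∑' r : {r : Fin 3 → ℤ // r ≠ -q}, G r := hsum.tsum_le_tsum hle (hG.subtype _)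
    _ ≤ ∑' r, G r := hG.tsum_subtype_le G _ (fun r => by positivity)
    _ ≤ _ := by rw [hG_tsum]; norm_num at hh_le; linarith

lemma summable_and_tsum_div_norm_sq_le_of_tsum_sq_le {a : (Fin 3 → ℤ) → ℝ} {M B ν : ℝ}
    (ha : ∀ r, 0 ≤ a r) (haM : ∀ r, a r ≤ M) (hB : 0 ≤ B) (hν : 1 ≤ ν)
    (ha2 : Summable fun r => a r ^ 2) (ha2_le : ∑' r, a r ^ 2 ≤ B ^ 2 * ν ^ 3) (q : Fin 3 → ℤ) :
    Summable (fun r : {r : Fin 3 → ℤ // r ≠ -q} => a r / ‖latticePt q + latticePt r‖ ^ 2) ∧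
      ∑' r : {r : Fin 3 → ℤ // r ≠ -q}, a r / ‖latticePt q + latticePt r‖ ^ 2 ≤
        217 * (M + B) * ν := by
  have hM : 0 ≤ M := (ha 0).trans (haM 0)
  rcases (add_nonneg hM hB).eq_or_lt with hMB | hMB
  · have ha0 (r : Fin 3 → ℤ) : a r = 0 := le_antisymm (by linarith [haM r]) (ha r)
    simp [ha0, ← hMB]
  -- the cutoff `K = ⌊ν⌋` and weight `c = (M + B)ν²` balance the three terms at order `(M + B)ν`
  obtain ⟨hsum, hle⟩ :=
    summable_and_tsum_div_norm_sq_le ha haM (c := (M + B) * ν ^ 2) (by positivity) ha2 ⌊ν⌋₊ q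
  refine ⟨hsum, hle.trans ?_⟩
  have hK : ν < ⌊ν⌋₊ + 1 := Nat.lt_floor_add_one ν
  have hK' : (⌊ν⌋₊ : ℝ) ≤ ν := Nat.floor_le (by linarith)
  have h1 : (∑' r, a r ^ 2) / (4 * ((M + B) * ν ^ 2)) ≤ B * ν / 4 := by
    rw [div_le_iff₀ (by positivity)]
    have : B ^ 2 ≤ B * (M + B) := by nlinarith
    calc ∑' r, a r ^ 2 ≤ B ^ 2 * ν ^ 3 := ha2_le
      _ ≤ B * (M + B) * ν ^ 3 := by gcongr
      _ = B * ν / 4 * (4 * ((M + B) * ν ^ 2)) := by ring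
  have h2 : 2 * ((M + B) * ν ^ 2) / (⌊ν⌋₊ + 1) ≤ 2 * (M + B) * ν := by
    rw [div_le_iff₀ (by positivity)]
    nlinarith [mul_pos hMB (by linarith : (0 : ℝ) < ν)]
  have h3 : (⌊ν⌋₊ + 1) * M ≤ 2 * ν * M := by nlinarith
  nlinarith [mul_nonneg hM (by linarith : (0 : ℝ) ≤ ν), mul_nonneg hB (by linarith : (0 : ℝ) ≤ ν)]

/-- there is a universal `C > 0` such that whenever `|φ| ≤ M` and
`∑_{r∈2πℤ³} φ(r/N^β)² ≤ B²N^{3β}`, then for every `q ∈ 2πℤ³` the sum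
`(1/N)·∑_{r≠−q} |φ(r/N^β)|/|q+r|²` converges and is `≤ C(M+B)N^{β−1}`. -/
theorem statement_8 :
    ∃ C > 0, ∀ (β : ℝ) (N : ℕ) (M B : ℝ) (φ : E3 → ℝ),
      0 < β → β ≤ 1 → 1 ≤ N → 0 ≤ M → 0 ≤ B →
      (∀ k : E3, |φ k| ≤ M) →
      Summable (fun r : Fin 3 → ℤ => φ (((N : ℝ) ^ β)⁻¹ • latticePt r) ^ 2) →
      (∑' r : Fin 3 → ℤ, φ (((N : ℝ) ^ β)⁻¹ • latticePt r) ^ 2) ≤ B ^ 2 * (N : ℝ) ^ (3 * β) →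
      ∀ q : Fin 3 → ℤ,
        Summable (fun r : {r : Fin 3 → ℤ // r ≠ -q} =>
          |φ (((N : ℝ) ^ β)⁻¹ • latticePt r.1)| / ‖latticePt q + latticePt r.1‖ ^ 2) ∧
        (1 / N : ℝ) * (∑' r : {r : Fin 3 → ℤ // r ≠ -q},
            |φ (((N : ℝ) ^ β)⁻¹ • latticePt r.1)| / ‖latticePt q + latticePt r.1‖ ^ 2)
          ≤ C * (M + B) * (N : ℝ) ^ (β - 1) := by
  refine ⟨217, by norm_num, fun β N M B φ hβ _ hN _ hB hφ hsum hsum_le q => ?_⟩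
  have hN' : (1 : ℝ) ≤ N := by exact_mod_cast hN
  have hν : 1 ≤ (N : ℝ) ^ β := one_le_rpow hN' hβ.le
  have hν3 : (N : ℝ) ^ (3 * β) = ((N : ℝ) ^ β) ^ 3 := by
    rw [mul_comm, rpow_mul (by positivity)]
    norm_cast
  obtain ⟨hs, hle⟩ := summable_and_tsum_div_norm_sq_le_of_tsum_sq_le
    (a := fun r => |φ (((N : ℝ) ^ β)⁻¹ • latticePt r)|) (fun r => abs_nonneg _) (fun r => hφ _)
    hB hν (by simpa only [sq_abs] using hsum) (by simpa only [sq_abs, hν3] using hsum_le) q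
  refine ⟨hs, ?_⟩
  calc (1 / N : ℝ) * _ ≤ 1 / N * (217 * (M + B) * (N : ℝ) ^ β) := by gcongr
    _ = 217 * (M + B) * (N : ℝ) ^ (β - 1) := by
      rw [rpow_sub_one (by positivity)]
      ring
end
end

section
/- There exists a universal constant C>0 with the following property. Let 0<β≤1, N∈ℕ with N≥1, and M,B,A≥0. Let φ:ℝ³→ℝ satisfy |φ(k)| ≤ M for all k ∈ ℝ³ and ∑_{r∈2πℤ³} φ((u−r)/N^β)² ≤ B²·N^{3β} for all u ∈ ℝ³, and let η:2πℤ³→ℝ satisfy |η_q| ≤ A/(|q|²+1) for all q. Then for every p ∈ 2πℤ³, the sum ∑_{q∈2πℤ³} |φ((p−q)/N^β)|·|η_q| converges and (1/N)·| ∑_{q∈2πℤ³} φ((p−q)/N^β)·η_q | ≤ C·(M+B)·A·N^{β−1}. -/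
open MeasureTheory Real

noncomputable section

/-!
Write `R = N^β` and split the sum at `‖q‖∞ ≈ R`. The shell `‖q‖∞ = m` of `ℤ³` has `24m² + 2`
points, on which `|η_q| ≲ A/(m² + 1)`. Near the origin, `|φ| ≤ M` and
`∑_{m ≤ R} (24m² + 2)/(m² + 1) ≲ R` bound the sum by `≲ MAR`. Far from it, Cauchy–Schwarz with
`∑ φ² ≤ B²R³` and `∑_{m > R} (24m² + 2)/(m² + 1)² ≲ 1/R` bound it by `≲ BAR`.
-/

open Finset

def supNorm (q : Fin 3 → ℤ) : ℕ := univ.sup fun i => (q i).natAbs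

def cube (m : ℕ) : Finset (Fin 3 → ℤ) := Fintype.piFinset fun _ => Icc (-(m : ℤ)) m

lemma mem_cube {q : Fin 3 → ℤ} {m : ℕ} : q ∈ cube m ↔ supNorm q ≤ m := by
  simp only [cube, Fintype.mem_piFinset, mem_Icc, supNorm, Finset.sup_le_iff, mem_univ,
    true_implies]
  exact forall_congr' fun i => by omega

lemma card_cube (m : ℕ) : #(cube m) = (2 * m + 1) ^ 3 := by
  simp only [cube, Fintype.card_piFinset, Int.card_Icc, prod_const, card_univ, Fintype.card_fin]
  congr 1
  omega

lemma card_filter_supNorm_eq_le (s : Finset (Fin 3 → ℤ)) (m : ℕ) :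
    #{q ∈ s | supNorm q = m} ≤ 24 * m ^ 2 + 2 := by
  cases m with
  | zero =>
    calc #{q ∈ s | supNorm q = 0} ≤ #(cube 0) :=
          card_le_card fun q hq => mem_cube.2 (mem_filter.1 hq).2.le
      _ ≤ _ := by simp [card_cube]
  | succ m =>
    have hsub : {q ∈ s | supNorm q = m + 1} ⊆ cube (m + 1) \ cube m := fun q hq => by
      simp only [mem_sdiff, mem_cube, (mem_filter.1 hq).2]
      omega
    have hcube : cube m ⊆ cube (m + 1) := fun q hq => mem_cube.2 (by have := mem_cube.1 hq; omega)
    calc #{q ∈ s | supNorm q = m + 1} ≤ #(cube (m + 1) \ cube m) := card_le_card hsub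
      _ = 24 * (m + 1) ^ 2 + 2 := by
        rw [card_sdiff_of_subset hcube, card_cube, card_cube]
        exact Nat.sub_eq_of_eq_add (by ring)

lemma sq_supNorm_le_norm_latticePt_sq (q : Fin 3 → ℤ) :
    (supNorm q : ℝ) ^ 2 ≤ ‖latticePt q‖ ^ 2 := by
  obtain ⟨i, -, hi⟩ := exists_mem_eq_sup univ univ_nonempty fun i => (q i).natAbs
  have hπ : 1 ≤ (2 * π) ^ 2 := by nlinarith [pi_gt_three]
  calc (supNorm q : ℝ) ^ 2 = (q i : ℝ) ^ 2 := by
        rw [supNorm, hi, Nat.cast_natAbs, Int.cast_abs, sq_abs]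
    _ ≤ (2 * π * q i) ^ 2 := by nlinarith [sq_nonneg (q i : ℝ)]
    _ ≤ ∑ j, (2 * π * q j) ^ 2 :=
        single_le_sum (f := fun j => (2 * π * (q j : ℝ)) ^ 2) (fun _ _ => sq_nonneg _) (mem_univ i)
    _ = ‖latticePt q‖ ^ 2 := by
        rw [EuclideanSpace.norm_eq, sq_sqrt (by positivity)]
        simp only [latticePt, PiLp.toLp_apply, norm_eq_abs, sq_abs]

lemma sum_comp_supNorm_le (s : Finset (Fin 3 → ℤ)) {g : ℕ → ℝ} (hg : ∀ m, 0 ≤ g m) :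
    ∑ q ∈ s, g (supNorm q) ≤ ∑ m ∈ s.image supNorm, (24 * (m : ℝ) ^ 2 + 2) * g m := by
  rw [sum_comp]
  refine sum_le_sum fun m _ => ?_
  rw [nsmul_eq_mul]
  exact mul_le_mul_of_nonneg_right (by exact_mod_cast card_filter_supNorm_eq_le s m) (hg m)

lemma sum_inv_supNorm_sq_add_one_le {s : Finset (Fin 3 → ℤ)} {T : ℕ}
    (hs : ∀ q ∈ s, supNorm q ≤ T) :
    ∑ q ∈ s, ((supNorm q : ℝ) ^ 2 + 1)⁻¹ ≤ 24 * ((T : ℝ) + 1) := by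
  have himage : s.image supNorm ⊆ range (T + 1) := fun m hm => by
    obtain ⟨q, hq, rfl⟩ := mem_image.1 hm
    exact mem_range.2 (Nat.lt_succ_of_le (hs q hq))
  calc ∑ q ∈ s, ((supNorm q : ℝ) ^ 2 + 1)⁻¹
      ≤ ∑ m ∈ s.image supNorm, (24 * (m : ℝ) ^ 2 + 2) * ((m : ℝ) ^ 2 + 1)⁻¹ :=
        sum_comp_supNorm_le s (g := fun m => ((m : ℝ) ^ 2 + 1)⁻¹) fun m => by positivity
    _ ≤ ∑ m ∈ s.image supNorm, (24 : ℝ) := by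
        refine sum_le_sum fun m _ => ?_
        rw [← div_eq_mul_inv, div_le_iff₀ (by positivity)]
        nlinarith
    _ ≤ ∑ m ∈ range (T + 1), (24 : ℝ) := sum_le_sum_of_subset_of_nonneg himage (by simp)
    _ = 24 * (T + 1) := by simp [mul_comm]

lemma sum_inv_supNorm_sq_add_one_sq_le {s : Finset (Fin 3 → ℤ)} {T : ℕ}
    (hs : ∀ q ∈ s, T < supNorm q) :
    ∑ q ∈ s, ((supNorm q : ℝ) ^ 2 + 1)⁻¹ ^ 2 ≤ 48 / ((T : ℝ) + 1) := by
  have himage : s.image supNorm ⊆ Ioo T (s.sup supNorm + 1) := fun m hm => by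
    obtain ⟨q, hq, rfl⟩ := mem_image.1 hm
    exact mem_Ioo.2 ⟨hs q hq, Nat.lt_succ_of_le (le_sup hq)⟩
  calc ∑ q ∈ s, ((supNorm q : ℝ) ^ 2 + 1)⁻¹ ^ 2
      ≤ ∑ m ∈ s.image supNorm, (24 * (m : ℝ) ^ 2 + 2) * ((m : ℝ) ^ 2 + 1)⁻¹ ^ 2 :=
        sum_comp_supNorm_le s (g := fun m => ((m : ℝ) ^ 2 + 1)⁻¹ ^ 2) fun m => by positivity
    _ ≤ ∑ m ∈ s.image supNorm, 24 * ((m : ℝ) ^ 2)⁻¹ := by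
        refine sum_le_sum fun m hm => ?_
        have hm : (0 : ℝ) < m := by
          obtain ⟨q, hq, rfl⟩ := mem_image.1 hm
          exact_mod_cast (Nat.zero_le T).trans_lt (hs q hq)
        rw [inv_pow, ← div_eq_mul_inv, ← div_eq_mul_inv,
          div_le_div_iff₀ (by positivity) (by positivity)]
        nlinarith [sq_nonneg ((m : ℝ) ^ 2)]
    _ ≤ ∑ m ∈ Ioo T (s.sup supNorm + 1), 24 * ((m : ℝ) ^ 2)⁻¹ :=
        sum_le_sum_of_subset_of_nonneg himage fun _ _ _ => by positivity
    _ ≤ 24 * (2 / (T + 1)) := by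
        rw [← mul_sum]
        gcongr
        exact sum_Ioo_inv_sq_le _ _
    _ = 48 / (T + 1) := by ring

section

variable {a η : (Fin 3 → ℤ) → ℝ} {M A : ℝ} {s : Finset (Fin 3 → ℤ)} {T : ℕ}

lemma sum_abs_mul_le_of_supNorm_le (ha : ∀ q, |a q| ≤ M) (hA : 0 ≤ A)
    (hη : ∀ q, |η q| ≤ A * ((supNorm q : ℝ) ^ 2 + 1)⁻¹) (hs : ∀ q ∈ s, supNorm q ≤ T) :
    ∑ q ∈ s, |a q * η q| ≤ M * A * (24 * ((T : ℝ) + 1)) := by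
  have hM : 0 ≤ M := (abs_nonneg _).trans (ha 0)
  calc ∑ q ∈ s, |a q * η q| ≤ ∑ q ∈ s, M * (A * ((supNorm q : ℝ) ^ 2 + 1)⁻¹) :=
        sum_le_sum fun q _ => by rw [abs_mul]; exact mul_le_mul (ha q) (hη q) (abs_nonneg _) hM
    _ = M * A * ∑ q ∈ s, ((supNorm q : ℝ) ^ 2 + 1)⁻¹ := by rw [mul_sum]; simp only [mul_assoc]
    _ ≤ M * A * (24 * ((T : ℝ) + 1)) :=
        mul_le_mul_of_nonneg_left (sum_inv_supNorm_sq_add_one_le hs) (mul_nonneg hM hA)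

lemma sq_sum_abs_mul_le_of_lt_supNorm (ha : Summable fun q => a q ^ 2)
    (hη : ∀ q, |η q| ≤ A * ((supNorm q : ℝ) ^ 2 + 1)⁻¹) (hs : ∀ q ∈ s, T < supNorm q) :
    (∑ q ∈ s, |a q * η q|) ^ 2 ≤ (∑' q, a q ^ 2) * (A ^ 2 * (48 / ((T : ℝ) + 1))) := by
  simp only [abs_mul]
  refine (sum_mul_sq_le_sq_mul_sq s _ _).trans (mul_le_mul ?_ ?_ (by positivity) (by positivity))
  · simpa only [sq_abs] using ha.sum_le_tsum s fun q _ => sq_nonneg (a q)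
  · calc ∑ q ∈ s, |η q| ^ 2 ≤ ∑ q ∈ s, A ^ 2 * ((supNorm q : ℝ) ^ 2 + 1)⁻¹ ^ 2 :=
          sum_le_sum fun q _ => by rw [← mul_pow]; exact pow_le_pow_left₀ (abs_nonneg _) (hη q) 2
      _ ≤ A ^ 2 * (48 / ((T : ℝ) + 1)) := by
          rw [← mul_sum]
          exact mul_le_mul_of_nonneg_left (sum_inv_supNorm_sq_add_one_sq_le hs) (sq_nonneg A)

lemma sum_abs_mul_le {B R : ℝ} (hR : 1 ≤ R) (hA : 0 ≤ A) (hB : 0 ≤ B) (ha : ∀ q, |a q| ≤ M)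
    (ha₂ : Summable fun q => a q ^ 2) (ha₂_le : ∑' q, a q ^ 2 ≤ B ^ 2 * R ^ 3)
    (hη : ∀ q, |η q| ≤ A * ((supNorm q : ℝ) ^ 2 + 1)⁻¹) (s : Finset (Fin 3 → ℤ)) :
    ∑ q ∈ s, |a q * η q| ≤ 48 * (M + B) * A * R := by
  set T := ⌊R⌋₊
  have hT : (T : ℝ) ≤ R := Nat.floor_le (by linarith)
  have hRT : R < T + 1 := Nat.lt_floor_add_one R
  have hM : 0 ≤ M := (abs_nonneg _).trans (ha 0)
  have near := sum_abs_mul_le_of_supNorm_le (s := {q ∈ s | supNorm q ≤ T}) ha hA hη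
    fun q hq => (mem_filter.1 hq).2
  have far : ∑ q ∈ s with ¬supNorm q ≤ T, |a q * η q| ≤ 7 * B * A * R := by
    refine abs_le_of_sq_le_sq' ?_ (by positivity) |>.2
    refine (sq_sum_abs_mul_le_of_lt_supNorm ha₂ hη
      fun q hq => not_le.1 (mem_filter.1 hq).2).trans ?_
    calc (∑' q, a q ^ 2) * (A ^ 2 * (48 / ((T : ℝ) + 1)))
        ≤ B ^ 2 * R ^ 3 * (A ^ 2 * (48 / R)) := by gcongr
      _ = 48 * (B * A * R) ^ 2 := by field_simp
      _ ≤ (7 * B * A * R) ^ 2 := by nlinarith [sq_nonneg (B * A * R)]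
  rw [← sum_filter_add_sum_filter_not s fun q => supNorm q ≤ T]
  nlinarith [mul_nonneg hM hA, mul_nonneg (mul_nonneg hB hA) (by linarith : (0 : ℝ) ≤ R)]

end

lemma summable_abs_and_abs_tsum_le {ι : Type*} {g : ι → ℝ} {c : ℝ}
    (h : ∀ s : Finset ι, ∑ i ∈ s, |g i| ≤ c) : Summable (fun i => |g i|) ∧ |∑' i, g i| ≤ c := by
  have hsum : Summable fun i => |g i| := summable_of_sum_le (fun i => abs_nonneg (g i)) h
  refine ⟨hsum, ?_⟩
  simp only [← norm_eq_abs] at hsum h ⊢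
  exact (norm_tsum_le_tsum_norm hsum).trans (hsum.tsum_le_of_sum_le h)

/-- there is a universal `C > 0` such that whenever `|φ| ≤ M`,
`∑_{r∈2πℤ³} φ((u−r)/N^β)² ≤ B²N^{3β}` for all `u`, and `|η_q| ≤ A/(|q|²+1)`, then for
every `p ∈ 2πℤ³` the sum `∑_q |φ((p−q)/N^β)|·|η_q|` converges and
`(1/N)·|∑_q φ((p−q)/N^β)·η_q| ≤ C(M+B)A·N^{β−1}`. -/
theorem statement_9 :
    ∃ C > 0, ∀ (β : ℝ) (N : ℕ) (M B A : ℝ) (φ : E3 → ℝ) (η : (Fin 3 → ℤ) → ℝ),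
      0 < β → β ≤ 1 → 1 ≤ N → 0 ≤ M → 0 ≤ B → 0 ≤ A →
      (∀ k : E3, |φ k| ≤ M) →
      (∀ u : E3,
        Summable (fun r : Fin 3 → ℤ => φ (((N : ℝ) ^ β)⁻¹ • (u - latticePt r)) ^ 2) ∧
        (∑' r : Fin 3 → ℤ, φ (((N : ℝ) ^ β)⁻¹ • (u - latticePt r)) ^ 2)
          ≤ B ^ 2 * (N : ℝ) ^ (3 * β)) →
      (∀ q : Fin 3 → ℤ, |η q| ≤ A / (‖latticePt q‖ ^ 2 + 1)) →
      ∀ p : Fin 3 → ℤ,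
        Summable (fun q : Fin 3 → ℤ =>
          |φ (((N : ℝ) ^ β)⁻¹ • (latticePt p - latticePt q))| * |η q|) ∧
        (1 / N : ℝ) * |∑' q : Fin 3 → ℤ,
            φ (((N : ℝ) ^ β)⁻¹ • (latticePt p - latticePt q)) * η q|
          ≤ C * (M + B) * A * (N : ℝ) ^ (β - 1) := by
  refine ⟨48, by norm_num, fun β N M B A φ η hβ _ hN _ hB hA hφ hφ₂ hη p => ?_⟩
  have hN₀ : (0 : ℝ) < N := by exact_mod_cast hN
  set R := (N : ℝ) ^ β
  have hR : 1 ≤ R := one_le_rpow (by exact_mod_cast hN) hβ.le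
  have hR₃ : (N : ℝ) ^ (3 * β) = R ^ 3 := by
    rw [← rpow_natCast, ← rpow_mul hN₀.le, mul_comm]
    norm_num
  have hη' (q : Fin 3 → ℤ) : |η q| ≤ A * ((supNorm q : ℝ) ^ 2 + 1)⁻¹ := by
    refine (hη q).trans ?_
    rw [← div_eq_mul_inv]
    exact div_le_div_of_nonneg_left hA (by positivity)
      (by linarith [sq_supNorm_le_norm_latticePt_sq q])
  obtain ⟨hsum, hle⟩ := summable_abs_and_abs_tsum_le <|
    sum_abs_mul_le hR hA hB (fun _ => hφ _) (hφ₂ _).1 (hR₃ ▸ (hφ₂ (latticePt p)).2) hη'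
  refine ⟨by simpa only [abs_mul] using hsum, ?_⟩
  calc (1 / N : ℝ) * |∑' q, φ (R⁻¹ • (latticePt p - latticePt q)) * η q|
      ≤ (1 / N) * (48 * (M + B) * A * R) := by gcongr
    _ = 48 * (M + B) * A * (N : ℝ) ^ (β - 1) := by
        rw [rpow_sub_one hN₀.ne']
        ring
end
end

section
/- For every real v ≥ 0, the family p ↦ |p|² + v − √(|p|⁴+2|p|²·v) − v²/(2|p|²), indexed by p ∈ 2πℤ³∖{0}, is (absolutely) summable. -/
open MeasureTheory Real

noncomputable section

/-- Index type for the punctured lattice `Λ*₊ = 2πℤ³ \ {0}`. -/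
abbrev NZ : Type := {n : Fin 3 → ℤ // n ≠ 0}

/-!
With `x = |p|²` and `s = √(x² + 2xv)`, the identity `(x + v - s)(x + v + s) = v²` shows that
`x + v - s` is `v²/(2x)` up to an error of order `v³/x²`. So the summand is `O(|p|⁻⁴)`, and
`∑ |p|⁻⁴` converges over a lattice of rank `3 < 4`.
-/

theorem abs_add_sub_sqrt_sub_sq_div_le {x v : ℝ} (hx : 0 < x) (hv : 0 ≤ v) :
    |x + v - √(x ^ 2 + 2 * x * v) - v ^ 2 / (2 * x)| ≤ v ^ 3 / (2 * x ^ 2) := by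
  set s := √(x ^ 2 + 2 * x * v)
  have hs : s ^ 2 = x ^ 2 + 2 * x * v := sq_sqrt (by positivity)
  have hxs : x ≤ s := le_sqrt_of_sq_le (by nlinarith)
  have hsv : s ≤ x + v := sqrt_le_iff.2 ⟨by linarith, by nlinarith⟩
  rw [abs_sub_comm, abs_of_nonneg, div_sub' (by positivity),
    div_le_div_iff₀ (by positivity) (by positivity)]
  · have hdx : 2 * x * (x + v - s) ≤ v ^ 2 := by nlinarith
    nlinarith [mul_le_mul hdx (by linarith : v + s - x ≤ 2 * v) (by linarith) (by positivity)]
  · rw [sub_nonneg, le_div_iff₀ (by positivity)]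
    nlinarith

theorem summable_norm_sum_intCast_smul_rpow {E ι : Type*} [NormedAddCommGroup E]
    [NormedSpace ℝ E] [Fintype ι] (b : Module.Basis ι ℝ E) {r : ℝ} (hr : r < -Fintype.card ι) :
    Summable fun n : ι → ℤ => ‖∑ i, (n i : ℝ) • b i‖ ^ r := by
  have : FiniteDimensional ℝ E := b.finiteDimensional_of_finite
  let bℤ := b.restrictScalars ℤ
  have h := ZLattice.summable_norm_rpow (Submodule.span ℤ (Set.range b)) r
    (by rwa [Module.finrank_eq_card_basis bℤ])
  refine (bℤ.equivFun.symm.toEquiv.summable_iff.2 h).congr fun n => ?_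
  simp [bℤ, Module.Basis.equivFun_symm_apply, Int.cast_smul_eq_zsmul]

def latticeBasis : Module.Basis (Fin 3) ℝ E3 :=
  (EuclideanSpace.basisFun (Fin 3) ℝ).toBasis.isUnitSMul fun _ => two_pi_pos.ne'.isUnit

theorem sum_intCast_smul_latticeBasis (n : Fin 3 → ℤ) :
    ∑ i, (n i : ℝ) • latticeBasis i = latticePt n := by
  ext j
  simp [latticeBasis, latticePt, Module.Basis.isUnitSMul_apply, Pi.single_apply]
  ring

theorem latticePt_ne_zero {n : Fin 3 → ℤ} (hn : n ≠ 0) : latticePt n ≠ 0 := by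
  contrapose! hn
  ext i
  simpa [latticePt, pi_pos.ne'] using congrArg (· i) hn

/-- for every `v ≥ 0` the family
`p ↦ |p|² + v − √(|p|⁴+2|p|²v) − v²/(2|p|²)`, `p ∈ Λ*₊`, is (absolutely) summable. -/
theorem statement_11 (v : ℝ) (hv : 0 ≤ v) :
    Summable (fun n : NZ =>
      ‖latticePt n.1‖ ^ 2 + v
        - Real.sqrt (‖latticePt n.1‖ ^ 4 + 2 * ‖latticePt n.1‖ ^ 2 * v)
        - v ^ 2 / (2 * ‖latticePt n.1‖ ^ 2)) := by
  have hsum : Summable fun n : NZ => ‖latticePt n.1‖ ^ (-4 : ℝ) := by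
    simpa only [sum_intCast_smul_latticeBasis, Function.comp_def] using
      (summable_norm_sum_intCast_smul_rpow latticeBasis (by norm_num)).subtype (· ≠ 0)
  refine .of_norm_bounded (hsum.mul_left (v ^ 3 / 2)) fun n => ?_
  have hp : 0 < ‖latticePt n.1‖ ^ 2 := by positivity [latticePt_ne_zero n.2]
  calc _ ≤ v ^ 3 / (2 * (‖latticePt n.1‖ ^ 2) ^ 2) := by
        simpa only [← pow_mul, Real.norm_eq_abs] using abs_add_sub_sqrt_sub_sq_div_le hp hv
    _ = _ := by
        rw [rpow_neg (norm_nonneg _)]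
        norm_cast
        ring

end
end

section
/- Let M,L>0 and κ>0 with κ·M ≤ π², and let W:ℝ³→ℝ satisfy |W(k)| ≤ M and |W(k)−W(0)| ≤ L·|k| for all k ∈ ℝ³. Define, for p ∈ 2πℤ³∖{0} and v ∈ ℝ, e_p(v) = −|p|² − κ·v + √(|p|⁴+2|p|²·κ·v) + κ²·v²/(2|p|²). Then there exists a constant C>0, depending only on M, L and κ, such that for every β>0, every N≥1 and every p ∈ 2πℤ³∖{0}: | e_p(W(p/N^β)) − e_p(W(0)) | ≤ C·N^{−β}/|p|³. -/
open MeasureTheory Real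

noncomputable section

/-- `e_p(v) = −|p|² − κv + √(|p|⁴+2|p|²κv) + κ²v²/(2|p|²)`. -/
def bogE (κ : ℝ) (p : E3) (v : ℝ) : ℝ :=
  -‖p‖ ^ 2 - κ * v + Real.sqrt (‖p‖ ^ 4 + 2 * ‖p‖ ^ 2 * κ * v)
    + κ ^ 2 * v ^ 2 / (2 * ‖p‖ ^ 2)

/-! Write `P = |p|²` and `t = √(P² + 2Pκv)`. Since `(t - P)(t + P) = 2Pκv`, the derivative of
`e_p` is `2κ³v²(t + 2P) / (t(t + P)²)`, which is at most `4κ³v²/P²` as soon as `4κ|v| ≤ P`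
(then `t² ≥ P²/2`). On `Λ*₊` we have `4κM ≤ 4π² ≤ |p|²`, so by the mean value theorem `e_p` is
`4κ³M²/|p|⁴`-Lipschitz on `[-M, M]`, and `|W(p/N^β) - W(0)| ≤ L|p|N^{-β}` gives the bound with
`C = 4κ³M²L`. -/

theorem half_sq_le_radicand {P κ v : ℝ} (hP : 0 < P) (hκ : 0 ≤ κ) (hv : 4 * κ * |v| ≤ P) :
    P ^ 2 / 2 ≤ P ^ 2 + 2 * P * κ * v := by
  nlinarith [mul_le_mul_of_nonneg_left (neg_abs_le v) hκ]

theorem abs_bogE_deriv_le {P κ v : ℝ} (hP : 0 < P) (hκ : 0 ≤ κ) (hv : 4 * κ * |v| ≤ P) :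
    |-κ + P * κ / √(P ^ 2 + 2 * P * κ * v) + κ ^ 2 * v / P| ≤ 4 * κ ^ 3 * v ^ 2 / P ^ 2 := by
  have hrad : 0 < P ^ 2 + 2 * P * κ * v :=
    lt_of_lt_of_le (by positivity) (half_sq_le_radicand hP hκ hv)
  set t := √(P ^ 2 + 2 * P * κ * v)
  have ht : 0 < t := Real.sqrt_pos.mpr hrad
  have ht2 : t ^ 2 = P ^ 2 + 2 * P * κ * v := Real.sq_sqrt hrad.le
  have hform : -κ + P * κ / t + κ ^ 2 * v / P
      = 2 * κ ^ 3 * v ^ 2 * (t + 2 * P) / (t * (t + P) ^ 2) := by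
    rw [eq_div_iff (by positivity)]
    field_simp
    linear_combination (κ * ((t + 2 * P) * κ * v - P * (t + P))) * ht2
  have hkey : P ^ 2 * (t + 2 * P) ≤ 2 * t * (t + P) ^ 2 := by
    nlinarith [half_sq_le_radicand hP hκ hv]
  rw [hform, abs_of_nonneg (by positivity), div_le_div_iff₀ (by positivity) (by positivity)]
  have : 0 ≤ κ ^ 3 * v ^ 2 := by positivity
  nlinarith [mul_le_mul_of_nonneg_left hkey this]

theorem hasDerivAt_bogE {κ v : ℝ} {p : E3} (hp : p ≠ 0)
    (hv : 0 < ‖p‖ ^ 4 + 2 * ‖p‖ ^ 2 * κ * v) :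
    HasDerivAt (bogE κ p)
      (-κ + ‖p‖ ^ 2 * κ / √(‖p‖ ^ 4 + 2 * ‖p‖ ^ 2 * κ * v) + κ ^ 2 * v / ‖p‖ ^ 2) v := by
  have hp' : ‖p‖ ≠ 0 := norm_ne_zero_iff.mpr hp
  have h : HasDerivAt (fun w => -‖p‖ ^ 2 - κ * w + √(‖p‖ ^ 4 + 2 * ‖p‖ ^ 2 * κ * w)
      + κ ^ 2 * w ^ 2 / (2 * ‖p‖ ^ 2)) _ v :=
    ((((hasDerivAt_id' v).const_mul κ).const_sub (-‖p‖ ^ 2)).add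
      ((((hasDerivAt_id' v).const_mul (2 * ‖p‖ ^ 2 * κ)).const_add (‖p‖ ^ 4)).sqrt hv.ne')).add
      (((hasDerivAt_pow 2 v).const_mul (κ ^ 2)).div_const (2 * ‖p‖ ^ 2))
  exact h.congr_deriv (by field_simp; ring)

theorem abs_bogE_sub_le {κ M v₁ v₂ : ℝ} {p : E3} (hp : p ≠ 0) (hκ : 0 ≤ κ)
    (hκM : 4 * κ * M ≤ ‖p‖ ^ 2) (hv₁ : |v₁| ≤ M) (hv₂ : |v₂| ≤ M) :
    |bogE κ p v₁ - bogE κ p v₂| ≤ 4 * κ ^ 3 * M ^ 2 / ‖p‖ ^ 4 * |v₁ - v₂| := by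
  have hP : 0 < ‖p‖ ^ 2 := by positivity
  have h4 : ‖p‖ ^ 4 = (‖p‖ ^ 2) ^ 2 := by ring
  have hκv : ∀ v ∈ Set.Icc (-M) M, 4 * κ * |v| ≤ ‖p‖ ^ 2 := fun v hv =>
    le_trans (by gcongr; exact abs_le.mpr hv) hκM
  have hderiv : ∀ v ∈ Set.Icc (-M) M, HasDerivWithinAt (bogE κ p)
      (-κ + ‖p‖ ^ 2 * κ / √(‖p‖ ^ 4 + 2 * ‖p‖ ^ 2 * κ * v) + κ ^ 2 * v / ‖p‖ ^ 2)
      (Set.Icc (-M) M) v := fun v hv =>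
    (hasDerivAt_bogE hp (h4 ▸ lt_of_lt_of_le (by positivity)
      (half_sq_le_radicand hP hκ (hκv v hv)))).hasDerivWithinAt
  have hbound : ∀ v ∈ Set.Icc (-M) M,
      ‖-κ + ‖p‖ ^ 2 * κ / √(‖p‖ ^ 4 + 2 * ‖p‖ ^ 2 * κ * v) + κ ^ 2 * v / ‖p‖ ^ 2‖
        ≤ 4 * κ ^ 3 * M ^ 2 / ‖p‖ ^ 4 := by
    intro v hv
    have hv' : |v| ≤ M := abs_le.mpr hv
    rw [h4]
    calc _ ≤ 4 * κ ^ 3 * v ^ 2 / (‖p‖ ^ 2) ^ 2 := abs_bogE_deriv_le hP hκ (hκv v hv)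
      _ ≤ 4 * κ ^ 3 * M ^ 2 / (‖p‖ ^ 2) ^ 2 := by
          gcongr 4 * κ ^ 3 * ?_ / _
          exact sq_le_sq' (abs_le.mp hv').1 (abs_le.mp hv').2
  simpa only [Real.norm_eq_abs] using
    (convex_Icc (-M) M).norm_image_sub_le_of_norm_hasDerivWithin_le
      hderiv hbound (abs_le.mp hv₂) (abs_le.mp hv₁)

theorem two_pi_le_norm_latticePt {n : Fin 3 → ℤ} (hn : n ≠ 0) : 2 * π ≤ ‖latticePt n‖ := by
  obtain ⟨i, hi⟩ := Function.ne_iff.mp hn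
  have : (1 : ℝ) ≤ |(n i : ℝ)| := by exact_mod_cast Int.one_le_abs hi
  calc 2 * π ≤ 2 * π * |(n i : ℝ)| := le_mul_of_one_le_right (by positivity) this
    _ = ‖latticePt n i‖ := by simp [latticePt, abs_of_pos pi_pos]
    _ ≤ ‖latticePt n‖ := PiLp.norm_apply_le _ i

/-- for bounded Lipschitz-at-`0` `W` with `κM ≤ π²`, there is a constant
`C = C(M,L,κ) > 0` with `|e_p(W(p/N^β)) − e_p(W(0))| ≤ C·N^{−β}/|p|³` for all `p ∈ Λ*₊`. -/
theorem statement_12 (M L κ : ℝ) (hM : 0 < M) (hL : 0 < L) (hκ : 0 < κ)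
    (hκM : κ * M ≤ π ^ 2) :
    ∃ C > 0, ∀ W : E3 → ℝ,
      (∀ k : E3, |W k| ≤ M) → (∀ k : E3, |W k - W 0| ≤ L * ‖k‖) →
      ∀ (β : ℝ) (N : ℕ), 0 < β → 1 ≤ N →
        ∀ n : Fin 3 → ℤ, n ≠ 0 →
          |bogE κ (latticePt n) (W (((N : ℝ) ^ β)⁻¹ • latticePt n))
              - bogE κ (latticePt n) (W 0)|
            ≤ C * (N : ℝ) ^ (-β) / ‖latticePt n‖ ^ 3 := by
  refine ⟨4 * κ ^ 3 * M ^ 2 * L, by positivity, fun W hWM hWL β N _ _ n hn => ?_⟩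
  have hp := two_pi_le_norm_latticePt hn
  set p := latticePt n
  have hp0 : 0 < ‖p‖ := lt_of_lt_of_le (by positivity) hp
  have hκp : 4 * κ * M ≤ ‖p‖ ^ 2 := by nlinarith [pow_le_pow_left₀ (by positivity) hp 2]
  have hk : ‖((N : ℝ) ^ β)⁻¹ • p‖ = (N : ℝ) ^ (-β) * ‖p‖ := by
    rw [norm_smul, norm_inv, Real.norm_of_nonneg (by positivity),
      Real.rpow_neg (Nat.cast_nonneg N)]
  calc _ ≤ 4 * κ ^ 3 * M ^ 2 / ‖p‖ ^ 4 * |W (((N : ℝ) ^ β)⁻¹ • p) - W 0| :=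
        abs_bogE_sub_le (norm_pos_iff.mp hp0) hκ.le hκp (hWM _) (hWM _)
    _ ≤ 4 * κ ^ 3 * M ^ 2 / ‖p‖ ^ 4 * (L * ((N : ℝ) ^ (-β) * ‖p‖)) := by
        gcongr
        exact hk ▸ hWL _
    _ = 4 * κ ^ 3 * M ^ 2 * L * (N : ℝ) ^ (-β) / ‖p‖ ^ 3 := by
        field_simp
end
end

section
/- There exists a universal constant C>0 with the following property. Let 0<β<1, N≥1, k≥2 an integer, M,B≥0, and let φ:ℝ³→ℝ satisfy |φ(u)| ≤ M for all u ∈ ℝ³ and ∑_{q∈2πℤ³} φ((u−q)/N^β)² ≤ B²·N^{3β} for all u ∈ ℝ³. Then the iterated sum T_k = (1/(2N))^k · ∑_{p∈Λ*₊} ∑_{q₁,…,q_{k−1}∈Λ*₊} (|φ(p/N^β)|/|p|²) · (|φ((p−q₁)/N^β)|/|q₁|²) · (∏_{i=1}^{k−2} |φ((q_i−q_{i+1})/N^β)|/|q_{i+1}|²) · |φ(q_{k−1}/N^β)| converges and satisfies T_k ≤ M·(C·(M+B))^k · N^{k(β−1)}. In particular, the k-th term of the Born series for 8π·a_N^β (the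 same expression with signed φ = κV̂ and the prefactor ((−1)^k/(2N)^k)) is bounded in absolute value by (C·κ·(M+B))^{k+1}·N^{k(β−1)}. -/
open MeasureTheory Real

noncomputable section

/-- The `i`-th entry (as a point of `ℝ³`) of a `k`-tuple of points of `Λ*₊`; junk value `0`
for `i ≥ k`.  For `k ≥ 2`, the tuple encodes `(p, q₁, …, q_{k−1})`. -/
def tuplePt (k : ℕ) (v : Fin k → NZ) (i : ℕ) : E3 :=
  if h : i < k then latticePt (v ⟨i, h⟩).1 else 0

/-- The absolute value of the summand of the `k`-th Born term: with `P₀ = p`, `Pᵢ = qᵢ`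
(`1 ≤ i ≤ k−1`) and `s = N^{−β}`, this is
`(|φ(sP₀)|/|P₀|²)·∏_{i=0}^{k−2}(|φ(s(Pᵢ−P_{i+1}))|/|P_{i+1}|²)·|φ(sP_{k−1})|`. -/
def bornTermAbs (φ : E3 → ℝ) (s : ℝ) (k : ℕ) (v : Fin k → NZ) : ℝ :=
  (|φ (s • tuplePt k v 0)| / ‖tuplePt k v 0‖ ^ 2) *
    (∏ i ∈ Finset.range (k - 1),
      |φ (s • (tuplePt k v i - tuplePt k v (i + 1)))| / ‖tuplePt k v (i + 1)‖ ^ 2) *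
    |φ (s • tuplePt k v (k - 1))|

/-- The signed summand of the `k`-th Born term. -/
def bornTermSigned (φ : E3 → ℝ) (s : ℝ) (k : ℕ) (v : Fin k → NZ) : ℝ :=
  (φ (s • tuplePt k v 0) / ‖tuplePt k v 0‖ ^ 2) *
    (∏ i ∈ Finset.range (k - 1),
      φ (s • (tuplePt k v i - tuplePt k v (i + 1))) / ‖tuplePt k v (i + 1)‖ ^ 2) *
    φ (s • tuplePt k v (k - 1))

/-!
Put `R = N^β`. Everything rests on the uniform link bound
`∑_{q ∈ Λ*₊} |φ((u - q)/R)| / |q|² ≤ (M + B) R` for all `u ∈ ℝ³`. Write `q = 2πn` with `n ∈ ℤ³`.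
Where `|n|_∞ ≤ R` use `|φ| ≤ M` together with `∑_{|n|_∞ ≤ R} |q|⁻² ≤ R`; elsewhere use
Cauchy–Schwarz against the `ℓ²` bound on `φ` together with `∑_{|n|_∞ > R} |q|⁻⁴ ≤ R⁻¹`. Both
lattice sums follow from the count of at most `26 m²` points of `ℤ³` with sup norm `m`. Summing the
chain `p, q₁, …, q_{k-1}` one variable at a time, every link costs `(M + B) R` and the last factor
is at most `M`, so `T_k ≤ M ((M + B) R / (2N))^k ≤ M (M + B)^k N^{k(β-1)}`: one may take `C = 1`.
The signed term is `κ^{k+1}` times a series dominated by the one defining `T_k`.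
-/

open scoped ENNReal

theorem ENNReal.tsum_ofReal_le_ofReal_iff {ι : Type*} {f : ι → ℝ} {X : ℝ} (hf : 0 ≤ f)
    (hX : 0 ≤ X) :
    ∑' i, ENNReal.ofReal (f i) ≤ ENNReal.ofReal X ↔ ∀ t : Finset ι, ∑ i ∈ t, f i ≤ X := by
  simp only [ENNReal.tsum_eq_iSup_sum, iSup_le_iff,
    ← ENNReal.ofReal_sum_of_nonneg fun i _ => hf i, ENNReal.ofReal_le_ofReal_iff hX]

theorem Summable.sum_subtype_le_tsum {α : Type*} {p : α → Prop} {f : α → ℝ} (hf : Summable f)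
    (h0 : 0 ≤ f) (t : Finset (Subtype p)) : ∑ q ∈ t, f q ≤ ∑' a, f a :=
  (Finset.sum_map t (Function.Embedding.subtype p) f).symm.le.trans <|
    hf.sum_le_tsum _ fun a _ => h0 a

theorem ENNReal.tsum_chain_le {ι : Type*} (a c : ι → ℝ≥0∞) (b : ι → ι → ℝ≥0∞) {D K : ℝ≥0∞}
    (ha : ∑' p, a p ≤ D) (hb : ∀ p, ∑' q, b p q ≤ D) (hc : ∀ q, c q ≤ K) (j : ℕ) :
    ∑' v : Fin (j + 1) → ι,
        a (v 0) * (∏ i : Fin j, b (v i.castSucc) (v i.succ)) * c (v (Fin.last j))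
      ≤ D ^ (j + 1) * K := by
  induction j generalizing a with
  | zero =>
    rw [← (Equiv.funUnique (Fin 1) ι).symm.tsum_eq]
    calc ∑' p, a p * 1 * c p ≤ ∑' p, a p * K := ENNReal.tsum_le_tsum fun p => by
            rw [mul_one]; exact mul_le_mul_right (hc p) _
      _ = (∑' p, a p) * K := ENNReal.tsum_mul_right
      _ ≤ D ^ (0 + 1) * K := by rw [zero_add, pow_one]; exact mul_le_mul_left ha K
  | succ j ih =>
    rw [← (Fin.consEquiv fun _ => ι).tsum_eq, ENNReal.tsum_prod']
    calc _ = ∑' (p : ι) (w : Fin (j + 1) → ι), a p *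
          (b p (w 0) * (∏ i : Fin j, b (w i.castSucc) (w i.succ)) * c (w (Fin.last j))) := by
          congr! 2 with p w
          simp [Fin.prod_univ_succ, mul_assoc]
      _ = ∑' p, a p * ∑' w : Fin (j + 1) → ι,
          b p (w 0) * (∏ i : Fin j, b (w i.castSucc) (w i.succ)) * c (w (Fin.last j)) :=
          tsum_congr fun p => ENNReal.tsum_mul_left
      _ ≤ ∑' p, a p * (D ^ (j + 1) * K) :=
          ENNReal.tsum_le_tsum fun p => mul_le_mul_right (ih (b p) (hb p)) _
      _ = (∑' p, a p) * (D ^ (j + 1) * K) := ENNReal.tsum_mul_right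
      _ ≤ D ^ (j + 1 + 1) * K := by
          rw [pow_succ' D (j + 1), mul_assoc]; exact mul_le_mul_left ha _

namespace BornSeries

open Finset

def supNorm {d : ℕ} (n : Fin d → ℤ) : ℕ := univ.sup fun i => (n i).natAbs

theorem natAbs_le_supNorm {d : ℕ} (n : Fin d → ℤ) (i : Fin d) : (n i).natAbs ≤ supNorm n :=
  le_sup (f := fun i => (n i).natAbs) (mem_univ i)

theorem exists_natAbs_eq_supNorm {d : ℕ} [NeZero d] (n : Fin d → ℤ) :
    ∃ i, (n i).natAbs = supNorm n := by
  obtain ⟨i, -, h⟩ := exists_mem_eq_sup univ univ_nonempty fun i => (n i).natAbs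
  exact ⟨i, h.symm⟩

theorem one_le_supNorm {d : ℕ} {n : Fin d → ℤ} (hn : n ≠ 0) : 1 ≤ supNorm n := by
  obtain ⟨i, hi⟩ := Function.ne_iff.1 hn
  exact (Int.natAbs_pos.2 hi).trans_le (natAbs_le_supNorm n i)

theorem supNorm_le_iff {d : ℕ} (n : Fin d → ℤ) (m : ℕ) :
    supNorm n ≤ m ↔ n ∈ Fintype.piFinset fun _ => Icc (-(m : ℤ)) m := by
  simp only [supNorm, Finset.sup_le_iff, mem_univ, true_implies, Fintype.mem_piFinset, mem_Icc,
    ← abs_le, Int.abs_eq_natAbs, Nat.cast_le]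

theorem card_le_of_supNorm_eq {d : ℕ} (t : Finset (Fin d → ℤ)) (m : ℕ) (hm : 1 ≤ m)
    (ht : ∀ n ∈ t, supNorm n = m) : #t ≤ (2 * m + 1) ^ d - (2 * m - 1) ^ d := by
  classical
  have hsub : t ⊆ (Fintype.piFinset fun _ => Icc (-(m : ℤ)) m) \
      Fintype.piFinset fun _ => Icc (-((m - 1 : ℕ) : ℤ)) (m - 1 : ℕ) := by
    intro n hn
    rw [mem_sdiff, ← supNorm_le_iff, ← supNorm_le_iff, ht n hn]
    omega
  refine (card_le_card hsub).trans_eq ?_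
  rw [card_sdiff_of_subset, Fintype.card_piFinset, Fintype.card_piFinset]
  · simp only [Int.card_Icc, prod_const, card_univ, Fintype.card_fin]
    congr 2 <;> omega
  · intro n hn
    rw [← supNorm_le_iff] at hn ⊢
    omega

theorem card_le_mul_sq_of_supNorm_eq (t : Finset (Fin 3 → ℤ)) (m : ℕ) (hm : 1 ≤ m)
    (ht : ∀ n ∈ t, supNorm n = m) : #t ≤ 26 * m ^ 2 := by
  refine (card_le_of_supNorm_eq t m hm ht).trans ?_
  obtain ⟨l, rfl⟩ : ∃ l, m = l + 1 := ⟨m - 1, by omega⟩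
  have hcube : (2 * (l + 1) + 1) ^ 3 = (2 * (l + 1) - 1) ^ 3 + (24 * (l + 1) ^ 2 + 2) := by
    rw [show 2 * (l + 1) - 1 = 2 * l + 1 by omega]; ring
  rw [hcube, Nat.add_sub_cancel_left]
  nlinarith

theorem sq_le_norm_sq_latticePt (n : Fin 3 → ℤ) :
    (2 * π) ^ 2 * (supNorm n : ℝ) ^ 2 ≤ ‖latticePt n‖ ^ 2 := by
  obtain ⟨i, hi⟩ := exists_natAbs_eq_supNorm n
  calc (2 * π) ^ 2 * (supNorm n : ℝ) ^ 2 = ‖latticePt n i‖ ^ 2 := by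
        rw [← hi, Nat.cast_natAbs, Int.cast_abs, sq_abs, Real.norm_eq_abs, sq_abs]
        simp only [latticePt]; ring
    _ ≤ ‖latticePt n‖ ^ 2 := by
        rw [EuclideanSpace.norm_sq_eq]
        exact single_le_sum (f := fun j => ‖latticePt n j‖ ^ 2) (fun j _ => sq_nonneg _)
          (mem_univ i)

theorem inv_norm_sq_latticePt_le (q : NZ) :
    (‖latticePt q.1‖ ^ 2)⁻¹ ≤ ((2 * π) ^ 2)⁻¹ * ((supNorm q.1 : ℝ) ^ 2)⁻¹ := by
  have hm : (1 : ℝ) ≤ supNorm q.1 := by exact_mod_cast one_le_supNorm q.2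
  rw [← mul_inv]
  exact inv_anti₀ (by positivity) (sq_le_norm_sq_latticePt q.1)

theorem sum_le_sum_image_supNorm (t : Finset NZ) {g : ℕ → ℝ} (hg : 0 ≤ g) :
    ∑ q ∈ t, g (supNorm q.1) ≤ ∑ m ∈ t.image (supNorm ·.1), 26 * (m : ℝ) ^ 2 * g m := by
  classical
  rw [← sum_fiberwise_of_maps_to' (fun q hq => mem_image_of_mem (supNorm ·.1) hq) g]
  refine sum_le_sum fun m hm => ?_
  obtain ⟨q, -, rfl⟩ := mem_image.1 hm
  rw [sum_const, nsmul_eq_mul]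
  refine mul_le_mul_of_nonneg_right ?_ (hg _)
  have hcard := card_le_mul_sq_of_supNorm_eq ((t.filter (supNorm ·.1 = supNorm q.1)).image (·.1))
    (supNorm q.1) (one_le_supNorm q.2) (by simp)
  rw [card_image_of_injective _ Subtype.val_injective] at hcard
  exact_mod_cast hcard

theorem sum_inv_norm_sq_latticePt_le (t : Finset NZ) {R : ℝ} (hR : 0 ≤ R)
    (ht : ∀ q ∈ t, (supNorm q.1 : ℝ) ≤ R) : ∑ q ∈ t, (‖latticePt q.1‖ ^ 2)⁻¹ ≤ R := by
  have hsub : t.image (supNorm ·.1) ⊆ Icc 1 ⌊R⌋₊ := by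
    simp only [subset_iff, mem_image, mem_Icc]
    rintro _ ⟨q, hq, rfl⟩
    exact ⟨one_le_supNorm q.2, Nat.le_floor (ht q hq)⟩
  have hcard : (#(t.image (supNorm ·.1)) : ℝ) ≤ R := by
    have := card_le_card hsub
    rw [Nat.card_Icc, Nat.add_sub_cancel] at this
    exact (Nat.cast_le.2 this).trans (Nat.floor_le hR)
  calc ∑ q ∈ t, (‖latticePt q.1‖ ^ 2)⁻¹
      ≤ ∑ q ∈ t, ((2 * π) ^ 2)⁻¹ * ((supNorm q.1 : ℝ) ^ 2)⁻¹ :=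
        sum_le_sum fun q _ => inv_norm_sq_latticePt_le q
    _ ≤ ((2 * π) ^ 2)⁻¹ * ∑ m ∈ t.image (supNorm ·.1), 26 * (m : ℝ) ^ 2 * ((m : ℝ) ^ 2)⁻¹ := by
        rw [← mul_sum]
        gcongr
        exact sum_le_sum_image_supNorm t (g := fun m => ((m : ℝ) ^ 2)⁻¹) fun m => by positivity
    _ ≤ ((2 * π) ^ 2)⁻¹ * (26 * R) := by
        gcongr
        refine (sum_le_card_nsmul _ _ 26 fun m _ => ?_).trans ?_
        · rw [mul_assoc]
          exact mul_le_of_le_one_right (by norm_num) (mul_inv_le_one)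
        · rw [nsmul_eq_mul, mul_comm]
          gcongr
    _ ≤ R := by
        rw [← mul_assoc]
        refine mul_le_of_le_one_left hR ?_
        rw [inv_mul_le_one₀ (by positivity)]
        nlinarith [pi_gt_three]

theorem sum_inv_norm_sq_latticePt_sq_le (t : Finset NZ) {R : ℝ} (hR : 0 < R)
    (ht : ∀ q ∈ t, R < supNorm q.1) : ∑ q ∈ t, ((‖latticePt q.1‖ ^ 2)⁻¹) ^ 2 ≤ R⁻¹ := by
  set S := t.image (supNorm ·.1)
  have hsub : S ⊆ Ioo ⌊R⌋₊ (S.sup id + 1) := by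
    intro m hm
    obtain ⟨q, hq, rfl⟩ := mem_image.1 hm
    exact mem_Ioo.2 ⟨(Nat.floor_lt hR.le).2 (ht q hq), Nat.lt_succ_of_le (le_sup (f := id) hm)⟩
  have htail : ∑ m ∈ S, ((m : ℝ) ^ 2)⁻¹ ≤ 2 * R⁻¹ :=
    calc ∑ m ∈ S, ((m : ℝ) ^ 2)⁻¹ ≤ ∑ m ∈ Ioo ⌊R⌋₊ (S.sup id + 1), ((m : ℝ) ^ 2)⁻¹ :=
          sum_le_sum_of_subset_of_nonneg hsub fun m _ _ => by positivity
      _ ≤ 2 / (⌊R⌋₊ + 1) := sum_Ioo_inv_sq_le _ _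
      _ ≤ 2 * R⁻¹ := by
          rw [div_eq_mul_inv]
          gcongr
          exact (Nat.lt_floor_add_one R).le
  calc ∑ q ∈ t, ((‖latticePt q.1‖ ^ 2)⁻¹) ^ 2
      ≤ ∑ q ∈ t, (((2 * π) ^ 2)⁻¹) ^ 2 * (((supNorm q.1 : ℝ) ^ 2)⁻¹) ^ 2 := by
        refine sum_le_sum fun q _ => ?_
        rw [← mul_pow]
        exact pow_le_pow_left₀ (by positivity) (inv_norm_sq_latticePt_le q) 2
    _ ≤ (((2 * π) ^ 2)⁻¹) ^ 2 * ∑ m ∈ S, 26 * (m : ℝ) ^ 2 * (((m : ℝ) ^ 2)⁻¹) ^ 2 := by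
        rw [← mul_sum]
        gcongr
        exact sum_le_sum_image_supNorm t (g := fun m => (((m : ℝ) ^ 2)⁻¹) ^ 2)
          fun m => by positivity
    _ = (((2 * π) ^ 2)⁻¹) ^ 2 * 26 * ∑ m ∈ S, ((m : ℝ) ^ 2)⁻¹ := by
        rw [mul_assoc, mul_sum S _ (26 : ℝ)]
        congr 1
        refine sum_congr rfl fun m _ => ?_
        rcases eq_or_ne (m : ℝ) 0 with hm | hm
        · simp [hm]
        · field_simp
    _ ≤ (((2 * π) ^ 2)⁻¹) ^ 2 * 26 * (2 * R⁻¹) := by gcongr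
    _ ≤ R⁻¹ := by
        rw [← mul_assoc]
        refine mul_le_of_le_one_left (by positivity) ?_
        have h36 : 36 ≤ (2 * π) ^ 2 := by nlinarith [pi_gt_three]
        rw [inv_pow, mul_assoc, inv_mul_le_one₀ (by positivity)]
        nlinarith

theorem sum_abs_div_norm_sq_latticePt_le {f : NZ → ℝ} {M B R : ℝ} (hM : 0 ≤ M) (hB : 0 ≤ B)
    (hR : 0 < R) (hfM : ∀ q, |f q| ≤ M) (hfB : ∀ t : Finset NZ, ∑ q ∈ t, f q ^ 2 ≤ B ^ 2 * R ^ 3)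
    (t : Finset NZ) : ∑ q ∈ t, |f q| / ‖latticePt q.1‖ ^ 2 ≤ (M + B) * R := by
  rw [← sum_filter_add_sum_filter_not t fun q => (supNorm q.1 : ℝ) ≤ R, add_mul]
  refine add_le_add ?_ ?_
  · calc ∑ q ∈ t with (supNorm q.1 : ℝ) ≤ R, |f q| / ‖latticePt q.1‖ ^ 2
        ≤ ∑ q ∈ t with (supNorm q.1 : ℝ) ≤ R, M * (‖latticePt q.1‖ ^ 2)⁻¹ :=
          sum_le_sum fun q _ => by rw [div_eq_mul_inv]; gcongr; exact hfM q
      _ ≤ M * R := by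
          rw [← mul_sum]
          gcongr
          exact sum_inv_norm_sq_latticePt_le _ hR.le fun q hq => (mem_filter.1 hq).2
  · set t' := t.filter fun q => ¬ (supNorm q.1 : ℝ) ≤ R
    have hfar : ∑ q ∈ t', ((‖latticePt q.1‖ ^ 2)⁻¹) ^ 2 ≤ R⁻¹ :=
      sum_inv_norm_sq_latticePt_sq_le t' hR fun q hq => not_le.1 (mem_filter.1 hq).2
    have hsq : (∑ q ∈ t', |f q| * (‖latticePt q.1‖ ^ 2)⁻¹) ^ 2 ≤ (B * R) ^ 2 :=
      calc (∑ q ∈ t', |f q| * (‖latticePt q.1‖ ^ 2)⁻¹) ^ 2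
          ≤ (∑ q ∈ t', |f q| ^ 2) * ∑ q ∈ t', ((‖latticePt q.1‖ ^ 2)⁻¹) ^ 2 :=
            sum_mul_sq_le_sq_mul_sq _ _ _
        _ ≤ (B ^ 2 * R ^ 3) * R⁻¹ := by
            simp only [sq_abs]
            gcongr
            exact hfB t'
        _ = (B * R) ^ 2 := by field_simp
    simp only [div_eq_mul_inv]
    exact (pow_le_pow_iff_left₀ (sum_nonneg fun q _ => by positivity) (by positivity)
      two_ne_zero).1 hsq

def negEquiv : NZ ≃ NZ := (Equiv.neg (Fin 3 → ℤ)).subtypeEquiv fun _ => neg_ne_zero.symm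

theorem latticePt_negEquiv (q : NZ) : latticePt (negEquiv q).1 = -latticePt q.1 := by
  ext i
  change 2 * π * ((-q.1 i : ℤ) : ℝ) = -(2 * π * (q.1 i : ℝ))
  push_cast
  ring

theorem tuplePt_of_lt {k : ℕ} (v : Fin k → NZ) {i : ℕ} (h : i < k) :
    tuplePt k v i = latticePt (v ⟨i, h⟩).1 := dif_pos h

theorem bornTermAbs_succ_eq (φ : E3 → ℝ) (s : ℝ) (j : ℕ) (v : Fin (j + 1) → NZ) :
    bornTermAbs φ s (j + 1) v =
      |φ (s • latticePt (v 0).1)| / ‖latticePt (v 0).1‖ ^ 2 *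
      (∏ i : Fin j, |φ (s • (latticePt (v i.castSucc).1 - latticePt (v i.succ).1))|
          / ‖latticePt (v i.succ).1‖ ^ 2) *
      |φ (s • latticePt (v (Fin.last j)).1)| := by
  rw [bornTermAbs, Nat.add_sub_cancel, ← Fin.prod_univ_eq_prod_range, tuplePt_of_lt v j.succ_pos,
    tuplePt_of_lt v j.lt_succ_self]
  congr 3 with i
  rw [tuplePt_of_lt v (by omega : (i : ℕ) < j + 1),
    tuplePt_of_lt v (by omega : (i : ℕ) + 1 < j + 1)]
  rfl

theorem bornTermAbs_nonneg (φ : E3 → ℝ) (s : ℝ) (k : ℕ) (v : Fin k → NZ) :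
    0 ≤ bornTermAbs φ s k v := by
  unfold bornTermAbs
  positivity

theorem abs_bornTermSigned (φ : E3 → ℝ) (s : ℝ) (k : ℕ) (v : Fin k → NZ) :
    |bornTermSigned φ s k v| = bornTermAbs φ s k v := by
  simp only [bornTermSigned, bornTermAbs, abs_mul, abs_div, abs_prod, abs_pow, abs_norm]

theorem bornTermSigned_const_mul (φ : E3 → ℝ) (κ s : ℝ) {k : ℕ} (hk : 1 ≤ k) (v : Fin k → NZ) :
    bornTermSigned (fun u => κ * φ u) s k v = κ ^ (k + 1) * bornTermSigned φ s k v := by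
  obtain ⟨j, rfl⟩ : ∃ j, k = j + 1 := ⟨k - 1, by omega⟩
  simp only [bornTermSigned, mul_div_assoc, prod_mul_distrib, prod_const, card_range,
    Nat.add_sub_cancel]
  ring

theorem summable_bornTermAbs_and_tsum_le {φ : E3 → ℝ} {M B R : ℝ} (hM : 0 ≤ M) (hB : 0 ≤ B)
    (hR : 0 < R) (hφM : ∀ u, |φ u| ≤ M)
    (hφB : ∀ u (t : Finset NZ), ∑ q ∈ t, φ (R⁻¹ • (u - latticePt q.1)) ^ 2 ≤ B ^ 2 * R ^ 3)
    {k : ℕ} (hk : 1 ≤ k) :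
    Summable (bornTermAbs φ R⁻¹ k) ∧ ∑' v, bornTermAbs φ R⁻¹ k v ≤ ((M + B) * R) ^ k * M := by
  obtain ⟨j, rfl⟩ : ∃ j, k = j + 1 := ⟨k - 1, by omega⟩
  have hD : 0 ≤ (M + B) * R := by positivity
  have hb : ∀ u : E3, ∑' q : NZ, ENNReal.ofReal
      (|φ (R⁻¹ • (u - latticePt q.1))| / ‖latticePt q.1‖ ^ 2) ≤ ENNReal.ofReal ((M + B) * R) :=
    fun u => (ENNReal.tsum_ofReal_le_ofReal_iff (fun q => by positivity) hD).2 <|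
      sum_abs_div_norm_sq_latticePt_le hM hB hR (fun q => hφM _) (hφB u)
  have ha : ∑' p : NZ, ENNReal.ofReal (|φ (R⁻¹ • latticePt p.1)| / ‖latticePt p.1‖ ^ 2)
      ≤ ENNReal.ofReal ((M + B) * R) := by
    rw [← negEquiv.tsum_eq]
    simpa [latticePt_negEquiv] using hb 0
  have hc : ∀ q : NZ, ENNReal.ofReal |φ (R⁻¹ • latticePt q.1)| ≤ ENNReal.ofReal M :=
    fun q => ENNReal.ofReal_le_ofReal (hφM _)
  have hchain := ENNReal.tsum_chain_le _ _ _ ha (fun p => hb (latticePt p.1)) hc j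
  rw [← ENNReal.ofReal_pow hD, ← ENNReal.ofReal_mul (by positivity)] at hchain
  have hsum : ∀ t : Finset (Fin (j + 1) → NZ),
      ∑ v ∈ t, bornTermAbs φ R⁻¹ (j + 1) v ≤ ((M + B) * R) ^ (j + 1) * M := by
    refine (ENNReal.tsum_ofReal_le_ofReal_iff (bornTermAbs_nonneg φ R⁻¹ (j + 1))
      (by positivity)).1 ?_
    refine le_of_eq_of_le (tsum_congr fun v => ?_) hchain
    rw [bornTermAbs_succ_eq, ENNReal.ofReal_mul (by positivity), ENNReal.ofReal_mul (by positivity),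
      ENNReal.ofReal_prod_of_nonneg fun i _ => by positivity]
  exact ⟨summable_of_sum_le (bornTermAbs_nonneg φ R⁻¹ (j + 1)) hsum,
    Real.tsum_le_of_sum_le (bornTermAbs_nonneg φ R⁻¹ (j + 1)) hsum⟩

theorem summable_bornTermSigned_const_mul_and_abs_tsum_le (φ : E3 → ℝ) (κ s : ℝ) {k : ℕ}
    (hk : 1 ≤ k) (hφ : Summable (bornTermAbs φ s k)) :
    Summable (bornTermSigned (fun u => κ * φ u) s k) ∧
      |∑' v, bornTermSigned (fun u => κ * φ u) s k v|
        ≤ |κ| ^ (k + 1) * ∑' v, bornTermAbs φ s k v := by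
  have habs : Summable fun v => ‖bornTermSigned φ s k v‖ := by
    simpa only [Real.norm_eq_abs, abs_bornTermSigned] using hφ
  have hmul : bornTermSigned (fun u => κ * φ u) s k =
      fun v => κ ^ (k + 1) * bornTermSigned φ s k v := funext (bornTermSigned_const_mul φ κ s hk)
  refine ⟨hmul ▸ habs.of_norm.mul_left _, ?_⟩
  rw [hmul, tsum_mul_left, abs_mul, abs_pow]
  refine mul_le_mul_of_nonneg_left ?_ (by positivity)
  simpa only [Real.norm_eq_abs, abs_bornTermSigned] using norm_tsum_le_tsum_norm habs

theorem rpow_div_two_mul_pow_le {N : ℝ} (hN : 0 < N) (β : ℝ) (k : ℕ) :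
    (N ^ β / (2 * N)) ^ k ≤ N ^ ((k : ℝ) * (β - 1)) := by
  rw [mul_comm (k : ℝ), rpow_mul_natCast hN.le, rpow_sub hN, rpow_one]
  gcongr
  linarith

theorem summable_bornTermAbs_and_scaled_tsum_le {φ : E3 → ℝ} {β M B : ℝ} {N k : ℕ} (hN : 1 ≤ N)
    (hM : 0 ≤ M) (hB : 0 ≤ B) (hφM : ∀ u, |φ u| ≤ M)
    (hφB : ∀ u : E3,
      Summable (fun q : Fin 3 → ℤ => φ (((N : ℝ) ^ β)⁻¹ • (u - latticePt q)) ^ 2) ∧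
      ∑' q : Fin 3 → ℤ, φ (((N : ℝ) ^ β)⁻¹ • (u - latticePt q)) ^ 2 ≤ B ^ 2 * (N : ℝ) ^ (3 * β))
    (hk : 1 ≤ k) :
    Summable (bornTermAbs φ ((N : ℝ) ^ β)⁻¹ k) ∧
      (1 / (2 * N) : ℝ) ^ k * ∑' v, bornTermAbs φ ((N : ℝ) ^ β)⁻¹ k v
        ≤ M * (M + B) ^ k * (N : ℝ) ^ ((k : ℝ) * (β - 1)) := by
  have hN0 : (0 : ℝ) < N := by exact_mod_cast hN
  set R := (N : ℝ) ^ β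
  have hR3 : (N : ℝ) ^ (3 * β) = R ^ 3 := by
    rw [mul_comm, ← rpow_mul_natCast hN0.le, Nat.cast_ofNat]
  obtain ⟨hsum, hle⟩ := summable_bornTermAbs_and_tsum_le hM hB (rpow_pos_of_pos hN0 β) hφM
    (fun u t => ((hφB u).1.sum_subtype_le_tsum (fun _ => sq_nonneg _) t).trans
      (hR3 ▸ (hφB u).2)) hk
  refine ⟨hsum, ?_⟩
  calc _ ≤ (1 / (2 * N) : ℝ) ^ k * (((M + B) * R) ^ k * M) := by gcongr
    _ = M * (M + B) ^ k * (R / (2 * N)) ^ k := by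
        rw [div_eq_mul_one_div R]; simp only [mul_pow]; ring
    _ ≤ _ := by gcongr; exact rpow_div_two_mul_pow_le hN0 β k

end BornSeries

open BornSeries in
/-- there is a universal `C > 0` such that, under the stated bounds on `φ`,
the `k`-th iterated Born sum `T_k` converges with `T_k ≤ M(C(M+B))^k N^{k(β−1)}`; in
particular the signed `k`-th Born term with `φ` replaced by `κφ` and prefactor
`(−1)^k/(2N)^k` is bounded in absolute value by `(Cκ(M+B))^{k+1} N^{k(β−1)}`. -/
theorem statement_14 :
    ∃ C > 0, ∀ (β : ℝ) (N k : ℕ) (M B : ℝ) (φ : E3 → ℝ),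
      0 < β → β < 1 → 1 ≤ N → 2 ≤ k → 0 ≤ M → 0 ≤ B →
      (∀ u : E3, |φ u| ≤ M) →
      (∀ u : E3,
        Summable (fun q : Fin 3 → ℤ => φ (((N : ℝ) ^ β)⁻¹ • (u - latticePt q)) ^ 2) ∧
        (∑' q : Fin 3 → ℤ, φ (((N : ℝ) ^ β)⁻¹ • (u - latticePt q)) ^ 2)
          ≤ B ^ 2 * (N : ℝ) ^ (3 * β)) →
      (Summable (fun v : Fin k → NZ => bornTermAbs φ ((N : ℝ) ^ β)⁻¹ k v) ∧
        (1 / (2 * N) : ℝ) ^ k * (∑' v : Fin k → NZ, bornTermAbs φ ((N : ℝ) ^ β)⁻¹ k v)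
          ≤ M * (C * (M + B)) ^ k * (N : ℝ) ^ ((k : ℝ) * (β - 1))) ∧
      (∀ κ : ℝ, 0 < κ →
        Summable (fun v : Fin k → NZ =>
          bornTermSigned (fun u => κ * φ u) ((N : ℝ) ^ β)⁻¹ k v) ∧
        |(-1 : ℝ) ^ k / (2 * N : ℝ) ^ k *
            ∑' v : Fin k → NZ, bornTermSigned (fun u => κ * φ u) ((N : ℝ) ^ β)⁻¹ k v|
          ≤ (C * κ * (M + B)) ^ (k + 1) * (N : ℝ) ^ ((k : ℝ) * (β - 1))) := by
  refine ⟨1, one_pos, fun β N k M B φ _ _ hN hk hM hB hφM hφB => ?_⟩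
  obtain ⟨hsum, hT⟩ := summable_bornTermAbs_and_scaled_tsum_le hN hM hB hφM hφB (by omega : 1 ≤ k)
  refine ⟨⟨hsum, by simpa only [one_mul] using hT⟩, fun κ hκ => ?_⟩
  obtain ⟨hsum', hle⟩ := summable_bornTermSigned_const_mul_and_abs_tsum_le φ κ _ (by omega) hsum
  rw [abs_of_pos hκ] at hle
  have hN0 : (0 : ℝ) < N := by exact_mod_cast hN
  refine ⟨hsum', ?_⟩
  calc _ = (1 / (2 * N) : ℝ) ^ k *
        |∑' v, bornTermSigned (fun u => κ * φ u) ((N : ℝ) ^ β)⁻¹ k v| := by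
        rw [abs_mul, abs_div, abs_pow, abs_neg, abs_one, one_pow, abs_of_pos (by positivity),
          one_div_pow]
    _ ≤ (1 / (2 * N) : ℝ) ^ k * (κ ^ (k + 1) * ∑' v, bornTermAbs φ ((N : ℝ) ^ β)⁻¹ k v) := by
        gcongr
    _ = κ ^ (k + 1) * ((1 / (2 * N) : ℝ) ^ k * ∑' v, bornTermAbs φ ((N : ℝ) ^ β)⁻¹ k v) := by
        ring
    _ ≤ κ ^ (k + 1) * ((M + B) * (M + B) ^ k * (N : ℝ) ^ ((k : ℝ) * (β - 1))) :=
        mul_le_mul_of_nonneg_left (hT.trans (by gcongr; linarith)) (by positivity)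
    _ = (1 * κ * (M + B)) ^ (k + 1) * (N : ℝ) ^ ((k : ℝ) * (β - 1)) := by
        rw [one_mul, mul_pow, pow_succ' (M + B)]; ring
end
end
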